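/- (Finitely many saturation points force discrete solutions.) Let m ∈ M(𝕋) and let η : 𝕋 → ℝ be continuous with ‖η‖_∞ ≤ 1 and ∫ η dm = ‖m‖_TV. Assume the saturation set S = { t ∈ 𝕋 : |η(t)| = 1 } is finite. Then m is a discrete measure supported in S: there exist real weights (β_τ)_{τ∈S} such that m = Σ_{τ∈S} β_τ·δ_τ, and for each τ ∈ S the sign of β_τ agrees with η(τ), i.e. β_τ·η(τ) ≥ 0. -/

import Mathlib

open MeasureTheory

/-- Total variation norm of a finite signed measure: `‖m‖_TV = m⁺(univ) + m⁻(univ)`. -/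
noncomputable def tvNorm {X : Type*} [MeasurableSpace X] (m : SignedMeasure X) : ℝ :=
  (m.totalVariation Set.univ).toReal

/-- Pairing of a function with a signed measure: `∫ η dm = ∫ η dm⁺ − ∫ η dm⁻`. -/
noncomputable def pairing {X : Type*} [MeasurableSpace X]
    (η : X → ℝ) (m : SignedMeasure X) : ℝ :=
  (∫ x, η x ∂m.toJordanDecomposition.posPart) - ∫ x, η x ∂m.toJordanDecomposition.negPart

/-- Supremum norm `‖η‖_∞ = sup_t |η t|`. -/
noncomputable def supNorm {X : Type*} (η : X → ℝ) : ℝ :=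
  sSup (Set.range fun t => |η t|)

/-!
Because `|η| ≤ 1`, `∫ η dm⁺ ≤ m⁺(𝕋)` and `-∫ η dm⁻ ≤ m⁻(𝕋)`; the certificate identity forces
equality in both, hence `η = 1` holds `m⁺`-a.e. and `η = -1` holds `m⁻`-a.e. Both parts are
therefore concentrated on the finite saturation set `S`, i.e. are finite sums of Dirac masses, and
`β τ * η τ = m⁺{τ} + m⁻{τ} ≥ 0`, since `m⁺` only charges points where `η = 1` and `m⁻` only
points where `η = -1`.
-/

open Set

lemma abs_le_of_supNorm_le {X : Type*} [TopologicalSpace X] [CompactSpace X] {η : X → ℝ}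
    (hη : Continuous η) {c : ℝ} (h : supNorm η ≤ c) (x : X) : |η x| ≤ c :=
  (le_csSup (isCompact_range hη.abs).bddAbove ⟨x, rfl⟩).trans h

section Saturation

variable {X : Type*} [MeasurableSpace X]

lemma ae_eq_one_of_measureReal_univ_le_integral {μ : Measure X} [IsFiniteMeasure μ] {f : X → ℝ}
    (hf : Integrable f μ) (hle : ∀ᵐ x ∂μ, f x ≤ 1) (h : μ.real univ ≤ ∫ x, f x ∂μ) :
    ∀ᵐ x ∂μ, f x = 1 := by
  have heq : ∫ x, f x ∂μ = ∫ _, (1 : ℝ) ∂μ :=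
    le_antisymm (integral_mono_ae hf (integrable_const 1) hle) (by simpa using h)
  exact (integral_eq_iff_of_ae_le hf (integrable_const 1) hle).mp heq

lemma tvNorm_eq_posPart_add_negPart (m : SignedMeasure X) :
    tvNorm m = m.toJordanDecomposition.posPart.real univ
      + m.toJordanDecomposition.negPart.real univ :=
  measureReal_add_apply

lemma ae_eq_sign_of_pairing_eq_tvNorm {m : SignedMeasure X} {η : X → ℝ} (hη : Measurable η)
    (hbd : ∀ x, |η x| ≤ 1) (h : pairing η m = tvNorm m) :
    (∀ᵐ x ∂m.toJordanDecomposition.posPart, η x = 1)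
      ∧ ∀ᵐ x ∂m.toJordanDecomposition.negPart, η x = -1 := by
  set μp := m.toJordanDecomposition.posPart
  set μn := m.toJordanDecomposition.negPart
  have hint (μ : Measure X) [IsFiniteMeasure μ] : Integrable η μ :=
    .of_bound hη.aestronglyMeasurable 1 (ae_of_all _ hbd)
  have hle : ∀ x, η x ≤ 1 := fun x => (abs_le.mp (hbd x)).2
  have hge : ∀ x, -η x ≤ 1 := fun x => by linarith [(abs_le.mp (hbd x)).1]
  have hp : ∫ x, η x ∂μp ≤ μp.real univ := by
    simpa using integral_mono (hint μp) (integrable_const 1) hle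
  have hn : ∫ x, -η x ∂μn ≤ μn.real univ := by
    simpa using integral_mono (hint μn).neg (integrable_const 1) hge
  rw [integral_neg] at hn
  rw [pairing, tvNorm_eq_posPart_add_negPart] at h
  refine ⟨ae_eq_one_of_measureReal_univ_le_integral (hint μp) (ae_of_all _ hle) (by linarith),
    ?_⟩
  filter_upwards [ae_eq_one_of_measureReal_univ_le_integral (f := fun x => -η x) (hint μn).neg
    (ae_of_all _ hge) (by rw [integral_neg]; linarith)] with x hx
  linarith

end Saturation

lemma measureReal_singleton_mul_of_ae_eq {X : Type*} [MeasurableSpace X] {μ : Measure X}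
    {f : X → ℝ} {c : ℝ}
    (h : ∀ᵐ x ∂μ, f x = c) (x : X) : μ.real {x} * f x = μ.real {x} * c := by
  by_cases hx : f x = c
  · rw [hx]
  · have hμx : μ {x} = 0 := measure_mono_null (by simpa using hx) (ae_iff.mp h)
    simp [Measure.real, hμx]

lemma Measure.toSignedMeasure_eq_sum_smul_dirac {X : Type*} [MeasurableSpace X]
    [MeasurableSingletonClass X] {μ : Measure X} [IsFiniteMeasure μ]
    {s : Finset X} (h : ∀ᵐ x ∂μ, x ∈ s) :
    μ.toSignedMeasure = ∑ x ∈ s, μ.real {x} • (Measure.dirac x).toSignedMeasure := by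
  ext A hA
  rw [Measure.toSignedMeasure_apply_measurable hA, FunLike.coe_sum, Finset.sum_apply]
  conv_lhs => rw [Measure.ae_mem_finset_iff.mp h]
  simp only [Measure.real, Measure.toSignedMeasure_apply_measurable hA,
    smul_apply, smul_eq_mul, Measure.coe_finsetSum, Finset.sum_apply,
    Measure.smul_apply, ENNReal.toReal_mul,
    ENNReal.toReal_sum fun _ _ => ENNReal.mul_ne_top (measure_ne_top _ _) (measure_ne_top _ _)]

/-- **finitely many saturation points force discrete solutions.**
Let `m ∈ M(𝕋)` and let `η : 𝕋 → ℝ` be continuous with `‖η‖_∞ ≤ 1` and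
`∫ η dm = ‖m‖_TV`.  If the saturation set `S = { t : |η t| = 1 }` is finite, then `m` is
a discrete measure supported in `S`: `m = Σ_{τ∈S} β_τ·δ_τ` with `β_τ·η(τ) ≥ 0`. -/
theorem discrete_solution_of_finite_saturation (T : ℝ) [Fact (0 < T)]
    (m : SignedMeasure (AddCircle T)) (η : AddCircle T → ℝ) (hη : Continuous η)
    (hηnorm : supNorm η ≤ 1) (hcert : pairing η m = tvNorm m)
    (hS : {t : AddCircle T | |η t| = 1}.Finite) :
    ∃ β : AddCircle T → ℝ,
      m = ∑ τ ∈ hS.toFinset, β τ • (Measure.dirac τ).toSignedMeasure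
        ∧ ∀ τ ∈ hS.toFinset, 0 ≤ β τ * η τ := by
  set μp := m.toJordanDecomposition.posPart
  set μn := m.toJordanDecomposition.negPart
  obtain ⟨hpos, hneg⟩ :=
    ae_eq_sign_of_pairing_eq_tvNorm hη.measurable (abs_le_of_supNorm_le hη hηnorm) hcert
  have hsupp {μ : Measure (AddCircle T)} {c : ℝ} (hc : |c| = 1) (h : ∀ᵐ t ∂μ, η t = c) :
      ∀ᵐ t ∂μ, t ∈ hS.toFinset := by
    filter_upwards [h] with t ht
    simpa [ht] using hc
  refine ⟨fun τ => μp.real {τ} - μn.real {τ}, ?_, fun τ _ => ?_⟩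
  · rw [← m.toSignedMeasure_toJordanDecomposition, JordanDecomposition.toSignedMeasure,
      Measure.toSignedMeasure_eq_sum_smul_dirac (hsupp (by simp) hpos),
      Measure.toSignedMeasure_eq_sum_smul_dirac (hsupp (by simp) hneg),
      ← Finset.sum_sub_distrib]
    exact Finset.sum_congr rfl fun τ _ => (sub_smul _ _ _).symm
  · rw [sub_mul, measureReal_singleton_mul_of_ae_eq hpos,
      measureReal_singleton_mul_of_ae_eq hneg]
    have := measureReal_nonneg (μ := μp) (s := {τ})
    have := measureReal_nonneg (μ := μn) (s := {τ})
    linarith
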